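/- arXiv:2101.11175 — 4 statements merged into one kernel-verified Lean document; each statement's English description precedes it below -/
import Mathlib

section
/- Let k, j, l be natural numbers with k ≥ j ≥ 1 and 2^(l-1) ≤ j < 2^l. Then there exists a natural number m with m < j such that j − m is 2-dominated by k + j − 2m (i.e. Nat.land (j − m) (k + j − 2m) = j − m) if and only if 2^l does not divide k − j. -/
/-!
Put `n = k - j` and `d = j - m`, so that the condition reads: `d` is a binary submask of
`n + 2d` for some `0 < d ≤ j`. If `2 ^ v` is the lowest set bit of `d`, then `2d` and, when
`2 ^ l ∣ n`, also `n` are divisible by `2 ^ (v + 1)` (as `d < 2 ^ l`), so bit `v` of `n + 2d`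
is clear and `d` is not a submask. Conversely, if `2 ^ v` is the lowest set bit of `n ≠ 0`
and `v < l`, then `d = 2 ^ v ≤ j` works, since adding `2 ^ (v + 1)` does not change bit `v`.
-/

namespace Nat

theorem testBit_two_pow_mul_of_odd {c : ℕ} (hc : Odd c) (v : ℕ) :
    (2 ^ v * c).testBit v = true := by
  simpa [testBit_two_pow_mul, testBit_zero] using Nat.odd_iff.mp hc

theorem testBit_of_land_eq_left {a b i : ℕ} (h : a.land b = a) (ha : a.testBit i = true) :
    b.testBit i = true := by
  have hi : (a &&& b).testBit i = a.testBit i := congrArg (testBit · i) h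
  simpa [testBit_land, ha] using hi

theorem two_pow_land_eq_self {b i : ℕ} (hb : b.testBit i = true) : (2 ^ i).land b = 2 ^ i := by
  show 2 ^ i &&& b = 2 ^ i
  simp [two_pow_and, hb]

theorem land_add_two_mul_ne_self {n d l : ℕ} (hn : 2 ^ l ∣ n) (hd0 : d ≠ 0) (hdl : d < 2 ^ l) :
    d.land (n + 2 * d) ≠ d := by
  obtain ⟨v, c, hc, rfl⟩ := exists_eq_two_pow_mul_odd hd0
  have hvl : v + 1 ≤ l := by
    have : 2 ^ v < 2 ^ l := lt_of_le_of_lt (Nat.le_mul_of_pos_right _ hc.pos) hdl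
    exact (Nat.pow_lt_pow_iff_right (by norm_num)).mp this
  obtain ⟨e, rfl⟩ := (pow_dvd_pow 2 hvl).trans hn
  intro h
  have hbit := testBit_of_land_eq_left h (testBit_two_pow_mul_of_odd hc v)
  rw [show 2 ^ (v + 1) * e + 2 * (2 ^ v * c) = 2 ^ (v + 1) * (e + c) by ring,
    testBit_two_pow_mul] at hbit
  simp at hbit

theorem two_pow_land_two_pow_mul_odd_add {v c : ℕ} (hc : Odd c) :
    (2 ^ v).land (2 ^ v * c + 2 * 2 ^ v) = 2 ^ v := by
  apply two_pow_land_eq_self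
  rw [show 2 ^ v * c + 2 * 2 ^ v = 2 ^ v * (c + 2) by ring]
  exact testBit_two_pow_mul_of_odd (hc.add_even even_two) v

end Nat

theorem stmt0_general (k j l : ℕ) (hkj : j ≤ k)
    (hl1 : 2 ^ (l - 1) ≤ j) (hl2 : j < 2 ^ l) :
    (∃ m, m < j ∧ Nat.land (j - m) (k + j - 2 * m) = j - m) ↔ ¬ (2 ^ l ∣ k - j) := by
  constructor
  · rintro ⟨m, hm, h⟩ hdvd
    rw [show k + j - 2 * m = (k - j) + 2 * (j - m) by omega] at h
    exact Nat.land_add_two_mul_ne_self hdvd (by omega) (by omega) h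
  · intro hndvd
    have hn0 : k - j ≠ 0 := fun h => hndvd (h ▸ dvd_zero _)
    obtain ⟨v, c, hc, hn⟩ := Nat.exists_eq_two_pow_mul_odd hn0
    have hvl : v < l := by
      by_contra! hlv
      exact hndvd (hn ▸ Dvd.dvd.mul_right (pow_dvd_pow 2 hlv) c)
    have hvj : 2 ^ v ≤ j := (Nat.pow_le_pow_right two_pos (by omega)).trans hl1
    refine ⟨j - 2 ^ v, Nat.sub_lt ((Nat.two_pow_pos v).trans_le hvj) (Nat.two_pow_pos v), ?_⟩
    rw [Nat.sub_sub_self hvj, show k + j - 2 * (j - 2 ^ v) = (k - j) + 2 * 2 ^ v by omega, hn]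
    exact Nat.two_pow_land_two_pow_mul_odd_add hc

/-- For `k ≥ j ≥ 1` with `2^(l-1) ≤ j < 2^l`, there exists `m < j` with
`j − m` 2-dominated by `k + j − 2m` (i.e. `Nat.land (j − m) (k + j − 2m) = j − m`)
if and only if `2^l` does not divide `k − j`. -/
theorem stmt0 (k j l : ℕ) (hj1 : 1 ≤ j) (hkj : j ≤ k)
    (hl1 : 2 ^ (l - 1) ≤ j) (hl2 : j < 2 ^ l) :
    (∃ m, m < j ∧ Nat.land (j - m) (k + j - 2 * m) = j - m) ↔ ¬ (2 ^ l ∣ k - j) :=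
  stmt0_general k j l hkj hl1 hl2
end

section
/- Let x, y, l be natural numbers with 0 < y < 2^l and x ≡ 2y (mod 2^l). Then y is not 2-dominated by x; i.e. Nat.land y x ≠ y. -/
theorem Nat.testBit_of_land_eq_left_s1 {x y i : ℕ} (h : Nat.land y x = y) (hi : y.testBit i) :
    x.testBit i := by
  have hbit : (y &&& x).testBit i = y.testBit i := congrArg (Nat.testBit · i) h
  rw [Nat.testBit_and, hi, Bool.true_and] at hbit
  exact hbit

theorem Nat.ModEq.testBit_eq {a b l i : ℕ} (h : a ≡ b [MOD 2 ^ l]) (hi : i < l) :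
    a.testBit i = b.testBit i := by
  simpa [Nat.testBit_mod_two_pow, hi] using congrArg (Nat.testBit · i) h

/-- The lowest set bit of `y` is clear in `2 * y`. -/
theorem Nat.exists_testBit_and_not_testBit_two_mul {y : ℕ} (hy : y ≠ 0) :
    ∃ i, y.testBit i ∧ (2 * y).testBit i = false := by
  obtain ⟨i, m, hm, rfl⟩ := Nat.exists_eq_two_pow_mul_odd hy
  refine ⟨i, ?_, ?_⟩
  · simp [Nat.testBit_two_pow_mul, Nat.testBit_zero, Nat.odd_iff.mp hm]
  · rw [← mul_assoc, ← pow_succ']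
    simp [Nat.testBit_two_pow_mul]

/-- If `0 < y < 2^l` and `x ≡ 2y (mod 2^l)`, then `y` is not 2-dominated by `x`,
i.e. `Nat.land y x ≠ y`. -/
theorem stmt1 (x y l : ℕ) (hy0 : 0 < y) (hyl : y < 2 ^ l)
    (hx : x ≡ 2 * y [MOD 2 ^ l]) :
    Nat.land y x ≠ y := by
  intro h
  obtain ⟨i, hyi, h2yi⟩ := Nat.exists_testBit_and_not_testBit_two_mul hy0.ne'
  have hil : i < l :=
    (Nat.pow_lt_pow_iff_right one_lt_two).mp ((Nat.ge_two_pow_of_testBit hyi).trans_lt hyl)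
  have hxi := Nat.testBit_of_land_eq_left_s1 h hyi
  rw [hx.testBit_eq hil, h2yi] at hxi
  exact Bool.false_ne_true hxi
end

section
/- Let p be a prime and let j, k be natural numbers with k ≥ j ≥ 2; set n = k + j. Assume p divides exactly one of the 2j−1 consecutive integers n, n−1, …, n−2j+2, and let i be the unique index with 0 ≤ i ≤ 2j−2 and p ∣ n − i. Assume further that either j < p, or j = p and p² divides k + 1. Then for every natural number m ≤ j: j − m is p-dominated by n − 2m if and only if m + j ≤ i or i + 1 ≤ 2m. -/
/-- `a` is `p`-dominated by `b`: every digit of the base-`p` expansion of `a` is at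
most the corresponding digit of the base-`p` expansion of `b`. -/
def pDom (p a b : ℕ) : Prop :=
  ∀ t, (Nat.digits p a).getD t 0 ≤ (Nat.digits p b).getD t 0

/-!
Since `p` divides exactly one of `n, n - 1, …, n - 2j + 2`, namely `n - i`, we get
`i < p` and `2j - 2 < i + p`. For `m < j` with `j - m < p`, `j - m` is a single base-`p` digit,
so it is dominated by `n - 2m` iff it is at most the last digit of `n - 2m`, which is
`i - 2m` when `2m ≤ i` and `i + p - 2m` otherwise; this gives the two alternatives. The only
remaining case is `j = p`, `m = 0`, where `p² ∣ k + 1` makes the second digit of `n` vanish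
while that of `p` is `1`.
-/

section Digits

variable {p : ℕ}

lemma pDom_zero_left (b : ℕ) : pDom p 0 b := by
  intro t
  simp

lemma pDom_iff_le_mod (hp : 1 < p) {a : ℕ} (b : ℕ) (ha : a < p) :
    pDom p a b ↔ a ≤ b % p := by
  simp only [pDom, Nat.getD_digits _ _ hp]
  refine ⟨fun h => by simpa [Nat.mod_eq_of_lt ha] using h 0, fun h t => ?_⟩
  rcases t with _ | t
  · simpa [Nat.mod_eq_of_lt ha] using h
  · have : a / p ^ (t + 1) = 0 := Nat.div_eq_of_lt (ha.trans_le (Nat.le_self_pow (by omega) p))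
    simp [this]

lemma not_pDom_base_add (hp : 1 < p) {k : ℕ} (hk : p ^ 2 ∣ k + 1) : ¬ pDom p p (k + p) := by
  intro h
  have hmod : (k + p) % p ^ 2 = p - 1 := by
    obtain ⟨s, hs⟩ := hk
    rw [show k + p = p - 1 + p ^ 2 * s by omega, Nat.add_mul_mod_self_left,
      Nat.mod_eq_of_lt ((Nat.sub_lt (by omega) one_pos).trans_le (Nat.le_self_pow two_ne_zero p))]
  have hdigit := h 1
  rw [Nat.getD_digits _ _ hp, Nat.getD_digits _ _ hp, pow_one, Nat.div_self (by omega),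
    Nat.mod_eq_of_lt hp, ← Nat.mod_mul_right_div_self, ← sq, hmod,
    Nat.div_eq_of_lt (by omega)] at hdigit
  omega

end Digits

section Window

variable {p n i : ℕ}

lemma sub_mod_eq_of_dvd_sub (hdvd : p ∣ n - i) (hin : i + p ≤ n) {c : ℕ} (hc : c ≤ i + p) :
    (n - c) % p = (i + p - c) % p := by
  refine ((Nat.modEq_iff_dvd' (by omega)).2 ?_).symm
  rw [show n - c - (i + p - c) = n - i - p by omega]
  exact Nat.dvd_sub hdvd dvd_rfl

lemma add_le_of_dvd_sub (hdvd : p ∣ n - i) (hin : i < n) : i + p ≤ n := by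
  have := Nat.le_of_dvd (by omega) hdvd
  omega

variable {w : ℕ} (hi : i ≤ w) (hdvd : p ∣ n - i)
  (huniq : ∀ t, t ≤ w → p ∣ n - t → t = i)
include hi hdvd huniq

lemma lt_of_dvd_sub_unique (hwn : w < n) : i < p := by
  have hp : 0 < p := Nat.pos_of_dvd_of_pos hdvd (by omega)
  by_contra! h
  have hdvd' : p ∣ n - (i - p) := by
    rw [show n - (i - p) = n - i + p by omega]
    exact dvd_add hdvd dvd_rfl
  have := huniq (i - p) (by omega) hdvd'
  omega

lemma lt_add_of_dvd_sub_unique (hwn : w < n) : w < i + p := by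
  have hp : 0 < p := Nat.pos_of_dvd_of_pos hdvd (by omega)
  by_contra! h
  have hdvd' : p ∣ n - (i + p) := by
    rw [show n - (i + p) = n - i - p by omega]
    exact Nat.dvd_sub hdvd dvd_rfl
  have := huniq (i + p) h hdvd'
  omega

end Window

lemma pDom_sub_iff_of_dvd_sub {p n i j m : ℕ} (hp : 1 < p) (hdvd : p ∣ n - i) (hip : i < p)
    (hin : i + p ≤ n) (hwin : 2 * j - 2 < i + p) (hmj : m < j) (hjm : j - m < p) :
    pDom p (j - m) (n - 2 * m) ↔ m + j ≤ i ∨ i + 1 ≤ 2 * m := by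
  rw [pDom_iff_le_mod hp _ hjm, sub_mod_eq_of_dvd_sub hdvd hin (by omega)]
  rcases le_or_gt (2 * m) i with h | h
  · rw [show i + p - 2 * m = i - 2 * m + p by omega, Nat.add_mod_right,
      Nat.mod_eq_of_lt (by omega)]
    omega
  · rw [Nat.mod_eq_of_lt (by omega)]
    omega

/-- If `p` is prime, `k ≥ j ≥ 2`, `n = k + j`, `p` divides exactly one of the
integers `n, n-1, …, n-2j+2` (namely `n - i` with `0 ≤ i ≤ 2j-2`), and either
`j < p`, or `j = p` and `p² ∣ k + 1`, then for every `m ≤ j`: `j − m` is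
`p`-dominated by `n − 2m` if and only if `m + j ≤ i` or `i + 1 ≤ 2m`. -/
theorem stmt5 (p j k : ℕ) (hp : p.Prime) (hj : 2 ≤ j) (hkj : j ≤ k)
    (n : ℕ) (hn : n = k + j) (i : ℕ) (hi : i ≤ 2 * j - 2) (hdvd : p ∣ n - i)
    (huniq : ∀ t, t ≤ 2 * j - 2 → p ∣ n - t → t = i)
    (hcase : j < p ∨ (j = p ∧ p ^ 2 ∣ k + 1)) :
    ∀ m : ℕ, m ≤ j → (pDom p (j - m) (n - 2 * m) ↔ (m + j ≤ i ∨ i + 1 ≤ 2 * m)) := by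
  have hwn : 2 * j - 2 < n := by omega
  have hip := lt_of_dvd_sub_unique hi hdvd huniq hwn
  have hwin := lt_add_of_dvd_sub_unique hi hdvd huniq hwn
  have hin := add_le_of_dvd_sub hdvd (by omega)
  intro m hm
  rcases hm.eq_or_lt with rfl | hmj
  · simp only [Nat.sub_self, pDom_zero_left, true_iff]
    omega
  rcases lt_or_ge (j - m) p with hjm | hjm
  · exact pDom_sub_iff_of_dvd_sub hp.one_lt hdvd hip hin hwin hmj hjm
  obtain ⟨rfl, hsq⟩ : j = p ∧ p ^ 2 ∣ k + 1 := hcase.resolve_left (by omega)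
  obtain rfl : m = 0 := by omega
  rw [Nat.sub_zero, mul_zero, Nat.sub_zero, hn]
  exact iff_of_false (not_pDom_base_add hp.one_lt hsq) (by omega)
end

section
/- Let p be an odd prime and let j, n be natural numbers with j ≥ 1 and n ≥ 2j. Then the following are equivalent: (1) for all m with 1 ≤ m ≤ j and all a with 1 ≤ a ≤ m, padicValNat p (n − m − a + 2) = padicValNat p (m − a + 1); (2) for all t with n − 2j + 2 ≤ t ≤ n, p does not divide t. -/
/-!
Both hook lengths of a row are `≥ 1`, and the second one is at most `j`. If `p` divides none of
the `2j - 1` consecutive integers `n - 2j + 2, …, n`, then `p ≥ 2j`, so `p` divides no hook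
length at all and both valuations vanish. Conversely, every `t` in that window is a first-column
hook length `n - m - a + 2` whose partner `m - a + 1` is `1` or `2`, which `p` does not divide
since it is odd; equality of the valuations then forces `p ∤ t`.
-/

lemma padicValNat_eq_zero_of_pos_of_lt {p k : ℕ} (hk : 0 < k) (hkp : k < p) :
    padicValNat p k = 0 :=
  padicValNat.eq_zero_of_not_dvd (Nat.not_dvd_of_pos_of_lt hk hkp)

lemma not_dvd_of_padicValNat_eq_zero {p t : ℕ} (hp : p ≠ 1) (ht : t ≠ 0)
    (hval : padicValNat p t = 0) : ¬ p ∣ t := by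
  rcases padicValNat.eq_zero_iff.mp hval with h | h | h
  exacts [absurd h hp, absurd h ht, h]

/-- Any `p` consecutive naturals contain a multiple of `p`. -/
lemma lt_of_forall_not_dvd_Ioc {p n k : ℕ} (hp : 0 < p) (hk : k ≤ n)
    (h : ∀ t, n - k < t → t ≤ n → ¬ p ∣ t) : k < p := by
  by_contra! hpk
  have hmod : n % p < p := Nat.mod_lt n hp
  exact h (n - n % p) (by omega) (Nat.sub_le n _) (Nat.dvd_sub_mod n)

lemma exists_row_of_mem_window {j n t : ℕ} (ht : n - 2 * j + 2 ≤ t) (htn : t ≤ n) :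
    ∃ m a, 1 ≤ a ∧ a ≤ m ∧ m ≤ j ∧ n - m - a + 2 = t ∧ m - a + 1 ≤ 2 := by
  obtain ⟨e, he | he⟩ : ∃ e, n - t = 2 * e ∨ n - t = 2 * e + 1 := Nat.even_or_odd' (n - t)
  · exact ⟨e + 1, e + 1, by omega, le_rfl, by omega, by omega, by omega⟩
  · exact ⟨e + 2, e + 1, by omega, by omega, by omega, by omega, by omega⟩

theorem stmt8_general (p j n : ℕ) (hp : p.Prime) (hodd : Odd p)
    (hn : 2 * j ≤ n) :
    (∀ m, 1 ≤ m → m ≤ j → ∀ a, 1 ≤ a → a ≤ m →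
        padicValNat p (n - m - a + 2) = padicValNat p (m - a + 1)) ↔
      (∀ t, n - 2 * j + 2 ≤ t → t ≤ n → ¬ p ∣ t) := by
  have hp3 : 3 ≤ p := hp.odd_iff.mp hodd
  constructor
  · intro h t ht htn
    obtain ⟨m, a, ha, ham, hmj, rfl, hsecond⟩ := exists_row_of_mem_window ht htn
    refine not_dvd_of_padicValNat_eq_zero hp.one_lt.ne' (by omega) ?_
    rw [h m (by omega) hmj a ha ham]
    exact padicValNat_eq_zero_of_pos_of_lt (by omega) (by omega)
  · intro h m hm hmj a ha ham
    have hjp : 2 * j - 1 < p :=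
      lt_of_forall_not_dvd_Ioc hp.pos (by omega) fun t ht htn => h t (by omega) htn
    rw [padicValNat.eq_zero_of_not_dvd (h _ (by omega) (by omega)),
      padicValNat_eq_zero_of_pos_of_lt (by omega) (by omega)]

/-- For an odd prime `p`, `j ≥ 1` and `n ≥ 2j`, the hook-length-valuation
criterion for simultaneous irreducibility of the two-column Weyl modules
is equivalent to `p` dividing none of `n, n-1, …, n-2j+2`. -/
theorem stmt8 (p j n : ℕ) (hp : p.Prime) (hodd : Odd p) (hj : 1 ≤ j)
    (hn : 2 * j ≤ n) :
    (∀ m, 1 ≤ m → m ≤ j → ∀ a, 1 ≤ a → a ≤ m →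
        padicValNat p (n - m - a + 2) = padicValNat p (m - a + 1)) ↔
      (∀ t, n - 2 * j + 2 ≤ t → t ≤ n → ¬ p ∣ t) :=
  stmt8_general p j n hp hodd hn
end
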